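/- Initial-condition independence of liminf-boundedness for the deterministic Riccati recursion: for any deterministic binary sequence z and any two positive semidefinite initial matrices Σ₁ and Σ₂, liminf_{k→∞} Tr(P_k^{Σ₁}) < ∞ if and only if liminf_{k→∞} Tr(P_k^{Σ₂}) < ∞. (Equivalently: if liminf_{k→∞} Tr(P_k) = ∞ for some positive semidefinite initial condition then it equals ∞ for all, and if liminf_{k→∞} Tr(P_k) < ∞ for some positive semidefinite initial condition then it is finite for all.) -/

import Mathlib

/-!
Both one-step maps have the form `X ↦ (A + K C) X (A + K C)ᵀ + K R Kᵀ + Q`: `h` with `K = 0`,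
and `g` as the minimum over all gains `K`, attained at the Kalman gain. Each such map sends
`X ≤ α Y` to `f X ≤ α f Y` when `α ≥ 1`, because the constant term `K R Kᵀ + Q` is positive
semidefinite; so a bound `P ≤ α P'` propagates along the recursion. Controllability makes the
`n`-th iterate from any initial condition positive definite: a vector `v` in its kernel satisfies
`√Q (Aᵀ)ʲ v = 0` for every `j < n`, since the term `K R Kᵀ` forces `Kᵀ v = 0` at every step.
Hence the `n`-th iterate dominates a multiple of any other one, and from then on
`Tr P_k^{Σ₂} ≤ α Tr P_k^{Σ₁}`.
-/

open Filter Matrix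

noncomputable section

/-- The operator `h(X) = A X Aᵀ + Q`. -/
def hOp {n : ℕ} (A Q : Matrix (Fin n) (Fin n) ℝ) (X : Matrix (Fin n) (Fin n) ℝ) :
    Matrix (Fin n) (Fin n) ℝ :=
  A * X * Aᵀ + Q

/-- The operator `g(X) = A X Aᵀ + Q − A X Cᵀ (C X Cᵀ + R)⁻¹ C X Aᵀ`. -/
def gOp {n m : ℕ} (A Q : Matrix (Fin n) (Fin n) ℝ) (C : Matrix (Fin m) (Fin n) ℝ)
    (R : Matrix (Fin m) (Fin m) ℝ) (X : Matrix (Fin n) (Fin n) ℝ) :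
    Matrix (Fin n) (Fin n) ℝ :=
  A * X * Aᵀ + Q - A * X * Cᵀ * (C * X * Cᵀ + R)⁻¹ * (C * X * Aᵀ)

/-- The stacked observability matrix `[C; CA; …; CA^(k−1)]`. -/
def obsMat {n m : ℕ} (C : Matrix (Fin m) (Fin n) ℝ) (A : Matrix (Fin n) (Fin n) ℝ) (k : ℕ) :
    Matrix (Fin k × Fin m) (Fin n) ℝ :=
  fun p j => (C * A ^ (p.1 : ℕ)) p.2 j

/-- The controllability matrix `[S, AS, …, A^(n−1) S]`. -/
def ctrbMat {n : ℕ} (A : Matrix (Fin n) (Fin n) ℝ) (S : Matrix (Fin n) (Fin n) ℝ) :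
    Matrix (Fin n) (Fin n × Fin n) ℝ :=
  fun i p => (A ^ (p.1 : ℕ) * S) i p.2

/-- The square root of a positive semidefinite matrix, as `Matrix.PosSemidef.sqrt` was
defined in the older Mathlib (since removed). -/
def Matrix.PosSemidef.sqrt {n : Type*} [Fintype n] [DecidableEq n]
    {A : Matrix n n ℝ} (hA : A.PosSemidef) : Matrix n n ℝ :=
  hA.1.eigenvectorUnitary.1 * diagonal ((↑) ∘ (√·) ∘ hA.1.eigenvalues) *
  (star hA.1.eigenvectorUnitary : Matrix n n ℝ)

/-- The deterministic covariance recursion driven by the binary sequence `z`: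
`P 0 = S`, `P (k+1) = g (P k)` if `z k` holds, `P (k+1) = h (P k)` otherwise. -/
def detFilt {n m : ℕ} (A Q : Matrix (Fin n) (Fin n) ℝ) (C : Matrix (Fin m) (Fin n) ℝ)
    (R : Matrix (Fin m) (Fin m) ℝ) (z : ℕ → Bool) (S : Matrix (Fin n) (Fin n) ℝ) :
    ℕ → Matrix (Fin n) (Fin n) ℝ
  | 0 => S
  | k + 1 =>
      if z k then gOp A Q C R (detFilt A Q C R z S k)
      else hOp A Q (detFilt A Q C R z S k)

open scoped MatrixOrder ComplexOrder

namespace Matrix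

section PSD

variable {ι 𝕜 : Type*} [Fintype ι] [RCLike 𝕜]

lemma PosSemidef.mulVec_eq_zero_of_add {X Y : Matrix ι ι 𝕜} (hX : X.PosSemidef)
    (hY : Y.PosSemidef) {v : ι → 𝕜} (h : (X + Y) *ᵥ v = 0) : X *ᵥ v = 0 := by
  have hsum : star v ⬝ᵥ X *ᵥ v + star v ⬝ᵥ Y *ᵥ v = 0 := by
    rw [← dotProduct_add, ← add_mulVec, h, dotProduct_zero]
  rw [← hX.dotProduct_mulVec_zero_iff]
  exact ((add_eq_zero_iff_of_nonneg (hX.dotProduct_mulVec_nonneg v)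
    (hY.dotProduct_mulVec_nonneg v)).mp hsum).1

lemma PosSemidef.mulVec_conjTranspose_eq_zero {κ : Type*} [Fintype κ] {X : Matrix ι ι 𝕜}
    (hX : X.PosSemidef) (B : Matrix κ ι 𝕜) {v : κ → 𝕜} (h : (B * X * Bᴴ) *ᵥ v = 0) :
    X *ᵥ (Bᴴ *ᵥ v) = 0 := by
  rw [← hX.dotProduct_mulVec_zero_iff, star_mulVec, conjTranspose_conjTranspose,
    ← dotProduct_mulVec, mulVec_mulVec, mulVec_mulVec, h, dotProduct_zero]

lemma PosSemidef.posDef_of_mulVec_eq_zero [DecidableEq ι] {P : Matrix ι ι 𝕜}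
    (hP : P.PosSemidef) (h : ∀ v, P *ᵥ v = 0 → v = 0) : P.PosDef := by
  refine hP.posDef_iff_isUnit.mpr (mulVec_injective_iff_isUnit.mp fun v w hvw => ?_)
  simpa [sub_eq_zero] using h (v - w) (by rw [mulVec_sub, hvw, sub_self])

lemma PosDef.eventually_le_smul [DecidableEq ι] {P S : Matrix ι ι 𝕜} (hP : P.PosDef)
    (hS : S.IsHermitian) : ∀ᶠ α : ℝ in atTop, S ≤ α • P := by
  cases isEmpty_or_nonempty ι
  · exact .of_forall fun _ => le_of_eq (Subsingleton.elim _ _)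
  obtain ⟨r, hr, hrP⟩ := (CFC.exists_pos_algebraMap_le_iff hP.isHermitian.isSelfAdjoint).mpr
    fun _ hx => hP.isStrictlyPositive.spectrum_pos hx
  obtain ⟨c, hc⟩ :=
    hS.spectrum_real_eq_range_eigenvalues ▸ (Set.finite_range _).bddAbove
  filter_upwards [eventually_ge_atTop (c / r), eventually_ge_atTop 0] with α hαc hα0
  calc S ≤ algebraMap ℝ _ c :=
        (le_algebraMap_iff_spectrum_le hS.isSelfAdjoint).mpr fun _ hx => hc hx
    _ ≤ algebraMap ℝ _ (α * r) := by
      gcongr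
      exact (div_le_iff₀ hr).mp hαc
    _ = α • algebraMap ℝ _ r := by rw [Algebra.smul_def, ← map_mul]
    _ ≤ α • P := smul_le_smul_of_nonneg_left hrP hα0

end PSD

section Real

variable {ι : Type*} [Fintype ι]

lemma PosSemidef.mul_mul_transpose_same {κ : Type*} [Fintype κ] {X : Matrix ι ι ℝ}
    (hX : X.PosSemidef) (B : Matrix κ ι ℝ) : (B * X * Bᵀ).PosSemidef := by
  simpa using hX.mul_mul_conjTranspose_same B

lemma mul_mul_transpose_le_mul_mul_transpose {X Y : Matrix ι ι ℝ} (h : X ≤ Y)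
    (B : Matrix ι ι ℝ) : B * X * Bᵀ ≤ B * Y * Bᵀ := by
  simpa [star_eq_conjTranspose] using star_right_conjugate_le_conjugate h B

lemma mul_mul_transpose_add_le_smul {X Y N F : Matrix ι ι ℝ} {α : ℝ} (hα : 1 ≤ α)
    (hN : 0 ≤ N) (hXY : X ≤ α • Y) : F * X * Fᵀ + N ≤ α • (F * Y * Fᵀ + N) := by
  rw [smul_add]
  gcongr
  · simpa using mul_mul_transpose_le_mul_mul_transpose hXY F
  · simpa using smul_le_smul_of_nonneg_right hα hN

variable [DecidableEq ι]

lemma PosSemidef.sqrt_mul_self {S : Matrix ι ι ℝ} (hS : S.PosSemidef) :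
    hS.sqrt * hS.sqrt = S := by
  have hU : (star hS.1.eigenvectorUnitary : Matrix ι ι ℝ) * hS.1.eigenvectorUnitary = 1 :=
    Unitary.coe_star_mul_self _
  have hD : diagonal ((↑) ∘ (√·) ∘ hS.1.eigenvalues) * diagonal ((↑) ∘ (√·) ∘ hS.1.eigenvalues)
      = diagonal (RCLike.ofReal ∘ hS.1.eigenvalues : ι → ℝ) := by
    rw [diagonal_mul_diagonal]
    congr 1 with i
    simp [Real.mul_self_sqrt (hS.eigenvalues_nonneg i)]
  conv_rhs => rw [hS.1.spectral_theorem, Unitary.conjStarAlgAut_apply]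
  simp only [PosSemidef.sqrt, Matrix.mul_assoc]
  rw [← Matrix.mul_assoc (star hS.1.eigenvectorUnitary : Matrix ι ι ℝ), hU, Matrix.one_mul,
    ← Matrix.mul_assoc (diagonal _), hD]

lemma PosSemidef.isHermitian_sqrt {S : Matrix ι ι ℝ} (hS : S.PosSemidef) :
    hS.sqrt.IsHermitian := by
  have hD : (diagonal ((↑) ∘ (√·) ∘ hS.1.eigenvalues) : Matrix ι ι ℝ).PosSemidef :=
    PosSemidef.diagonal fun i => Real.sqrt_nonneg _
  simpa [PosSemidef.sqrt, star_eq_conjTranspose] using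
    (hD.mul_mul_conjTranspose_same hS.1.eigenvectorUnitary.1).isHermitian

lemma PosSemidef.sqrt_mulVec_eq_zero {S : Matrix ι ι ℝ} (hS : S.PosSemidef) {v : ι → ℝ}
    (h : S *ᵥ v = 0) : hS.sqrt *ᵥ v = 0 := by
  rwa [← conjTranspose_mul_self_mulVec_eq_zero, hS.isHermitian_sqrt.eq, hS.sqrt_mul_self]

end Real

lemma eq_zero_of_mulVec_eq_zero_of_rank {ι κ K : Type*} [Fintype ι] [Fintype κ] [Field K]
    {M : Matrix κ ι K} (hM : M.rank = Fintype.card ι) {v : ι → K} (hv : M *ᵥ v = 0) :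
    v = 0 := by
  have hker := M.mulVecLin.finrank_range_add_finrank_ker
  rw [← rank, hM, Module.finrank_fintype_fun_eq_card, add_eq_left,
    Submodule.finrank_eq_zero] at hker
  simpa [hker] using (show v ∈ LinearMap.ker M.mulVecLin from hv)

end Matrix

lemma EReal.liminf_coe_lt_top_of_eventually_le_mul {ι : Type*} {l : Filter ι} {u v : ι → ℝ}
    {α : ℝ} (hα : 0 ≤ α) (huv : ∀ᶠ k in l, u k ≤ α * v k)
    (hv : l.liminf (fun k => (v k : EReal)) < ⊤) : l.liminf (fun k => (u k : EReal)) < ⊤ := by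
  obtain ⟨b, hvb, -⟩ := EReal.exists_between_coe_real hv
  have hfreq : ∃ᶠ k in l, (u k : EReal) ≤ (α * b : ℝ) :=
    ((frequently_lt_of_liminf_lt (by isBoundedDefault) hvb).and_eventually huv).mono
      fun k ⟨hvk, hk⟩ => EReal.coe_le_coe_iff.mpr <|
        hk.trans (mul_le_mul_of_nonneg_left (EReal.coe_lt_coe_iff.mp hvk).le hα)
  exact (liminf_le_of_frequently_le hfreq).trans_lt (EReal.coe_lt_top _)

section Riccati

variable {n m : ℕ} (A Q : Matrix (Fin n) (Fin n) ℝ) (C : Matrix (Fin m) (Fin n) ℝ)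
  (R : Matrix (Fin m) (Fin m) ℝ)

/-- The covariance update `φ(K, X)` under an arbitrary gain `K`; `gOp` is its minimum over `K`,
attained at `optGain`. -/
def gainOp (K : Matrix (Fin n) (Fin m) ℝ) (X : Matrix (Fin n) (Fin n) ℝ) :
    Matrix (Fin n) (Fin n) ℝ :=
  (A + K * C) * X * (A + K * C)ᵀ + (K * R * Kᵀ + Q)

def optGain (X : Matrix (Fin n) (Fin n) ℝ) : Matrix (Fin n) (Fin m) ℝ :=
  -(A * X * Cᵀ * (C * X * Cᵀ + R)⁻¹)

variable {A Q C R}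

lemma hOp_eq_gainOp_zero (X : Matrix (Fin n) (Fin n) ℝ) : hOp A Q X = gainOp A Q C R 0 X := by
  simp [hOp, gainOp]

/-- Completing the square in `K`. -/
lemma gainOp_eq_gOp_add {X : Matrix (Fin n) (Fin n) ℝ} (hX : X.IsSymm) (hR : R.IsSymm)
    (hM : IsUnit (C * X * Cᵀ + R).det) (K : Matrix (Fin n) (Fin m) ℝ) :
    gainOp A Q C R K X = gOp A Q C R X +
      (K - optGain A C R X) * (C * X * Cᵀ + R) * (K - optGain A C R X)ᵀ := by
  have hMsymm : (C * X * Cᵀ + R)ᵀ = C * X * Cᵀ + R := by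
    rw [transpose_add, hR.eq, transpose_mul, transpose_mul, transpose_transpose, hX.eq,
      Matrix.mul_assoc]
  have hG : (A * X * Cᵀ)ᵀ = C * X * Aᵀ := by
    rw [transpose_mul, transpose_mul, transpose_transpose, hX.eq, Matrix.mul_assoc]
  have hExpand : gainOp A Q C R K X = A * X * Aᵀ + Q + K * (C * X * Aᵀ) + A * X * Cᵀ * Kᵀ
      + K * (C * X * Cᵀ + R) * Kᵀ := by
    simp only [gainOp, transpose_add, transpose_mul, Matrix.mul_add, Matrix.add_mul,
      Matrix.mul_assoc]
    abel
  rw [hExpand, gOp, optGain, sub_neg_eq_add, transpose_add, transpose_mul, transpose_nonsing_inv,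
    hMsymm, hG]
  generalize C * X * Cᵀ + R = M at hM ⊢
  simp only [Matrix.mul_add, Matrix.add_mul, Matrix.mul_assoc,
    nonsing_inv_mul_cancel_left _ _ hM, mul_nonsing_inv_cancel_left _ _ hM]
  abel

lemma posDef_innovationCov {X : Matrix (Fin n) (Fin n) ℝ} (hX : X.PosSemidef) (hR : R.PosDef) :
    (C * X * Cᵀ + R).PosDef :=
  PosDef.posSemidef_add (hX.mul_mul_transpose_same C) hR

lemma gainOp_eq_gOp_add_of_posSemidef {X : Matrix (Fin n) (Fin n) ℝ} (hX : X.PosSemidef)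
    (hR : R.PosDef) (K : Matrix (Fin n) (Fin m) ℝ) :
    gainOp A Q C R K X = gOp A Q C R X +
      (K - optGain A C R X) * (C * X * Cᵀ + R) * (K - optGain A C R X)ᵀ :=
  gainOp_eq_gOp_add (isHermitian_iff_isSymm.mp hX.isHermitian)
    (isHermitian_iff_isSymm.mp hR.isHermitian)
    ((isUnit_iff_isUnit_det _).mp (posDef_innovationCov hX hR).isUnit) K

lemma gOp_eq_gainOp_optGain {X : Matrix (Fin n) (Fin n) ℝ} (hX : X.PosSemidef)
    (hR : R.PosDef) : gOp A Q C R X = gainOp A Q C R (optGain A C R X) X := by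
  simp [gainOp_eq_gOp_add_of_posSemidef hX hR]

lemma gOp_le_gainOp {X : Matrix (Fin n) (Fin n) ℝ} (hX : X.PosSemidef)
    (hR : R.PosDef) (K : Matrix (Fin n) (Fin m) ℝ) : gOp A Q C R X ≤ gainOp A Q C R K X := by
  rw [gainOp_eq_gOp_add_of_posSemidef hX hR K, le_add_iff_nonneg_right]
  exact ((posDef_innovationCov hX hR).posSemidef.mul_mul_transpose_same _).nonneg

lemma gainOp_le_smul (hQ : Q.PosSemidef) (hR : R.PosSemidef) (K : Matrix (Fin n) (Fin m) ℝ)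
    {X Y : Matrix (Fin n) (Fin n) ℝ} {α : ℝ} (hα : 1 ≤ α) (hXY : X ≤ α • Y) :
    gainOp A Q C R K X ≤ α • gainOp A Q C R K Y :=
  mul_mul_transpose_add_le_smul hα ((hR.mul_mul_transpose_same K).add hQ).nonneg hXY

lemma hOp_le_smul (hQ : Q.PosSemidef) {X Y : Matrix (Fin n) (Fin n) ℝ} {α : ℝ} (hα : 1 ≤ α)
    (hXY : X ≤ α • Y) : hOp A Q X ≤ α • hOp A Q Y :=
  mul_mul_transpose_add_le_smul hα hQ.nonneg hXY

lemma gOp_le_smul (hQ : Q.PosSemidef) (hR : R.PosDef) {X Y : Matrix (Fin n) (Fin n) ℝ}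
    (hX : X.PosSemidef) (hY : Y.PosSemidef) {α : ℝ} (hα : 1 ≤ α) (hXY : X ≤ α • Y) :
    gOp A Q C R X ≤ α • gOp A Q C R Y := by
  calc gOp A Q C R X ≤ gainOp A Q C R (optGain A C R Y) X := gOp_le_gainOp hX hR _
    _ ≤ α • gainOp A Q C R (optGain A C R Y) Y := gainOp_le_smul hQ hR.posSemidef _ hα hXY
    _ = α • gOp A Q C R Y := by rw [gOp_eq_gainOp_optGain hY hR]

lemma posSemidef_gainOp {X : Matrix (Fin n) (Fin n) ℝ} (hX : X.PosSemidef) (hQ : Q.PosSemidef)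
    (hR : R.PosSemidef) (K : Matrix (Fin n) (Fin m) ℝ) : (gainOp A Q C R K X).PosSemidef :=
  (hX.mul_mul_transpose_same _).add ((hR.mul_mul_transpose_same K).add hQ)

/-- The noise term `K R Kᵀ` forces `Kᵀ v = 0`, so the closed-loop matrix `A + K C` acts on `v`
as `A` does. -/
lemma gainOp_mulVec_eq_zero {X : Matrix (Fin n) (Fin n) ℝ} (hX : X.PosSemidef)
    (hQ : Q.PosSemidef) (hR : R.PosDef) (K : Matrix (Fin n) (Fin m) ℝ) {v : Fin n → ℝ}
    (h : gainOp A Q C R K X *ᵥ v = 0) : Q *ᵥ v = 0 ∧ X *ᵥ (Aᵀ *ᵥ v) = 0 := by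
  rw [gainOp] at h
  have hF := hX.mul_mul_transpose_same (A + K * C)
  have hKRK := hR.posSemidef.mul_mul_transpose_same K
  have hN : (K * R * Kᵀ + Q) *ᵥ v = 0 :=
    (hKRK.add hQ).mulVec_eq_zero_of_add hF (by rwa [add_comm] at h)
  have hKv : Kᵀ *ᵥ v = 0 := mulVec_injective_iff_isUnit.mpr hR.isUnit <| by
    simpa using hR.posSemidef.mulVec_conjTranspose_eq_zero K (hKRK.mulVec_eq_zero_of_add hQ hN)
  have hFv : X *ᵥ ((A + K * C)ᵀ *ᵥ v) = 0 := by
    simpa using hX.mulVec_conjTranspose_eq_zero (A + K * C) (hF.mulVec_eq_zero_of_add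
      (hKRK.add hQ) h)
  refine ⟨hQ.mulVec_eq_zero_of_add hKRK (by rwa [add_comm] at hN), ?_⟩
  rwa [transpose_add, add_mulVec, transpose_mul, ← mulVec_mulVec, hKv, mulVec_zero,
    add_zero] at hFv

variable {z : ℕ → Bool} {S S' : Matrix (Fin n) (Fin n) ℝ}

lemma posSemidef_detFilt (hQ : Q.PosSemidef) (hR : R.PosDef) (hS : S.PosSemidef) (k : ℕ) :
    (detFilt A Q C R z S k).PosSemidef := by
  induction k with
  | zero => exact hS
  | succ k ih =>
    rw [detFilt]
    split
    · rw [gOp_eq_gainOp_optGain ih hR]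
      exact posSemidef_gainOp ih hQ hR.posSemidef _
    · exact (ih.mul_mul_transpose_same A).add hQ

lemma detFilt_le_smul (hQ : Q.PosSemidef) (hR : R.PosDef) (hS : S.PosSemidef)
    (hS' : S'.PosSemidef) {α : ℝ} (hα : 1 ≤ α) {k₀ : ℕ}
    (h₀ : detFilt A Q C R z S k₀ ≤ α • detFilt A Q C R z S' k₀) :
    ∀ k ≥ k₀, detFilt A Q C R z S k ≤ α • detFilt A Q C R z S' k := by
  intro k hk
  induction k, hk using Nat.le_induction with
  | base => exact h₀
  | succ k _ ih =>
    rw [detFilt, detFilt]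
    split
    · exact gOp_le_smul hQ hR (posSemidef_detFilt hQ hR hS k) (posSemidef_detFilt hQ hR hS' k)
        hα ih
    · exact hOp_le_smul hQ hα ih

lemma detFilt_succ_mulVec_eq_zero (hQ : Q.PosSemidef) (hR : R.PosDef) (hS : S.PosSemidef)
    {k : ℕ} {v : Fin n → ℝ} (h : detFilt A Q C R z S (k + 1) *ᵥ v = 0) :
    Q *ᵥ v = 0 ∧ detFilt A Q C R z S k *ᵥ (Aᵀ *ᵥ v) = 0 := by
  have hP := posSemidef_detFilt (A := A) (C := C) (z := z) hQ hR hS k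
  rw [detFilt] at h
  split at h
  · rw [gOp_eq_gainOp_optGain hP hR] at h
    exact gainOp_mulVec_eq_zero hP hQ hR _ h
  · rw [hOp_eq_gainOp_zero (C := C) (R := R)] at h
    exact gainOp_mulVec_eq_zero hP hQ hR _ h

lemma detFilt_mulVec_eq_zero (hQ : Q.PosSemidef) (hR : R.PosDef) (hS : S.PosSemidef)
    {k : ℕ} {v : Fin n → ℝ} (h : detFilt A Q C R z S k *ᵥ v = 0) :
    ∀ j < k, Q *ᵥ ((Aᵀ) ^ j *ᵥ v) = 0 := by
  induction k generalizing v with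
  | zero => simp
  | succ k ih =>
    obtain ⟨hQv, hv⟩ := detFilt_succ_mulVec_eq_zero hQ hR hS h
    intro j hj
    cases j with
    | zero => simpa using hQv
    | succ j =>
      rw [pow_succ, ← mulVec_mulVec]
      exact ih hv j (by omega)

lemma posDef_detFilt (hQ : Q.PosSemidef) (hCtrb : (ctrbMat A hQ.sqrt).rank = n)
    (hR : R.PosDef) (hS : S.PosSemidef) : (detFilt A Q C R z S n).PosDef := by
  refine (posSemidef_detFilt hQ hR hS n).posDef_of_mulVec_eq_zero fun v hv => ?_
  have hsymm : hQ.sqrtᵀ = hQ.sqrt := by simpa using hQ.isHermitian_sqrt.eq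
  refine eq_zero_of_mulVec_eq_zero_of_rank (M := (ctrbMat A hQ.sqrt)ᵀ) (by simpa using hCtrb) ?_
  ext ⟨j, i⟩
  change ((A ^ (j : ℕ) * hQ.sqrt)ᵀ *ᵥ v) i = 0
  rw [transpose_mul, hsymm, transpose_pow, ← mulVec_mulVec,
    hQ.sqrt_mulVec_eq_zero (detFilt_mulVec_eq_zero hQ hR hS hv j j.isLt), Pi.zero_apply]

lemma liminf_trace_detFilt_lt_top (hQ : Q.PosSemidef) (hCtrb : (ctrbMat A hQ.sqrt).rank = n)
    (hR : R.PosDef) (hS : S.PosSemidef) (hS' : S'.PosSemidef)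
    (h : atTop.liminf (fun k => ((detFilt A Q C R z S k).trace : EReal)) < ⊤) :
    atTop.liminf (fun k => ((detFilt A Q C R z S' k).trace : EReal)) < ⊤ := by
  obtain ⟨α, hle, hα⟩ := (((posDef_detFilt hQ hCtrb hR hS).eventually_le_smul
    (posSemidef_detFilt hQ hR hS' n).isHermitian).and (eventually_ge_atTop 1)).exists
  refine EReal.liminf_coe_lt_top_of_eventually_le_mul (by linarith) ?_ h
  filter_upwards [eventually_ge_atTop n] with k hk
  simpa using OrderHomClass.mono (tracePositiveLinearMap (Fin n) ℝ ℝ)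
    (detFilt_le_smul hQ hR hS' hS hα hle k hk)

end Riccati

theorem liminf_trace_bounded_indep_init_general
    {n m : ℕ}
    (A : Matrix (Fin n) (Fin n) ℝ)
    (C : Matrix (Fin m) (Fin n) ℝ)
    (Q : Matrix (Fin n) (Fin n) ℝ) (hQ : Q.PosSemidef)
    (hCtrb : (ctrbMat A hQ.sqrt).rank = n)
    (R : Matrix (Fin m) (Fin m) ℝ) (hR : R.PosDef)
    (z : ℕ → Bool)
    (S1 S2 : Matrix (Fin n) (Fin n) ℝ) (hS1 : S1.PosSemidef) (hS2 : S2.PosSemidef) :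
    atTop.liminf (fun k => ((detFilt A Q C R z S1 k).trace : EReal)) < ⊤ ↔
      atTop.liminf (fun k => ((detFilt A Q C R z S2 k).trace : EReal)) < ⊤ :=
  ⟨liminf_trace_detFilt_lt_top hQ hCtrb hR hS1 hS2,
    liminf_trace_detFilt_lt_top hQ hCtrb hR hS2 hS1⟩

/-- Whether `liminf Tr(Pₖ) < ∞` for the deterministic Riccati recursion does not depend on
the (positive semidefinite) initial condition. -/
theorem liminf_trace_bounded_indep_init
    {n m : ℕ} (hn : 0 < n) (hm : 0 < m)
    (A : Matrix (Fin n) (Fin n) ℝ) (hA : IsUnit A.det)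
    (C : Matrix (Fin m) (Fin n) ℝ) (hObs : (obsMat C A n).rank = n)
    (Q : Matrix (Fin n) (Fin n) ℝ) (hQ : Q.PosSemidef)
    (hCtrb : (ctrbMat A hQ.sqrt).rank = n)
    (R : Matrix (Fin m) (Fin m) ℝ) (hR : R.PosDef)
    (z : ℕ → Bool)
    (S1 S2 : Matrix (Fin n) (Fin n) ℝ) (hS1 : S1.PosSemidef) (hS2 : S2.PosSemidef) :
    atTop.liminf (fun k => ((detFilt A Q C R z S1 k).trace : EReal)) < ⊤ ↔
      atTop.liminf (fun k => ((detFilt A Q C R z S2 k).trace : EReal)) < ⊤ :=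
  liminf_trace_bounded_indep_init_general A C Q hQ hCtrb R hR z S1 S2 hS1 hS2
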